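/- arXiv:2211.14980 — 8 statements merged into one kernel-verified Lean document; each statement's English description precedes it below -/
import Mathlib

section
/- Let λ ≥ 0, let P be a feature-consistent partition of Fin N, let F be a subset of the set of blocks of P, and let H be a natural number with H + 1 ≤ |P|. Let S = Fin N minus the union of the blocks in F, and for each feature vector v in the image of x restricted to S let u_v = {i ∈ S : x i = v} be the corresponding set of equivalent points. Then R(P) ≥ (1/N)·∑_{B∈F} SSE(B) + λ·H + λ + (1/N)·∑_v SSE(u_v). (Equivalent Points Lower Bound: every child tree's objective is at least the fixed-leaf loss plus the leaf penalty plus the total equivalence loss of the equivalent-point sets captured by the splitting leaves, since points with identical features can never be separated into different leaves.) -/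
open Finset

/-- Sum of squared errors of targets `y` on a block `B`, with prediction the mean of `y` on `B`. -/
noncomputable def sse {N : ℕ} (y : Fin N → ℝ) (B : Finset (Fin N)) : ℝ :=
  ∑ i ∈ B, (y i - (∑ j ∈ B, y j) / (B.card : ℝ)) ^ 2

/-- `P` is a partition of the set `S`: pairwise disjoint nonempty blocks whose union is `S`. -/
def IsPartitionOn {N : ℕ} (S : Finset (Fin N)) (P : Finset (Finset (Fin N))) : Prop :=
  (∀ B ∈ P, B.Nonempty) ∧
  (∀ B ∈ P, ∀ B' ∈ P, B ≠ B' → Disjoint B B') ∧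
  P.biUnion id = S

/-- Regularized objective of a partition (tree): MSE plus `lam` per leaf. -/
noncomputable def Robj {N : ℕ} (y : Fin N → ℝ) (lam : ℝ) (P : Finset (Finset (Fin N))) : ℝ :=
  (1 / (N : ℝ)) * ∑ B ∈ P, sse y B + lam * (P.card : ℝ)

/-- A partition is feature-consistent if equivalent points (identical feature vectors)
always lie in the same block. -/
def FeatureConsistent {N M : ℕ} (x : Fin N → Fin M → Bool)
    (P : Finset (Finset (Fin N))) : Prop :=
  ∀ i j : Fin N, x i = x j → ∀ B ∈ P, i ∈ B → j ∈ B

/-! Points with the same feature vector share a leaf of `P`, so the equivalent-point sets captured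
by the leaves outside `F` refine those leaves. Since the mean minimizes the squared error, the SSE
of a leaf is at least the total SSE of the equivalent-point sets it contains; the leaf penalty
contributes at least `λ (H + 1)`. -/

lemma sse_le_sum_sq_sub {N : ℕ} (y : Fin N → ℝ) (A : Finset (Fin N)) (c : ℝ) :
    sse y A ≤ ∑ i ∈ A, (y i - c) ^ 2 := by
  rcases A.eq_empty_or_nonempty with rfl | hA
  · simp [sse]
  set m := (∑ j ∈ A, y j) / (A.card : ℝ)
  have hdev : ∑ i ∈ A, (y i - m) = 0 := by
    rw [sum_sub_distrib, sum_const, nsmul_eq_mul,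
      mul_div_cancel₀ _ (Nat.cast_ne_zero.mpr hA.card_pos.ne'), sub_self]
  calc sse y A ≤ sse y A + A.card * (m - c) ^ 2 := le_add_of_nonneg_right (by positivity)
    _ = ∑ i ∈ A, ((y i - m) ^ 2 + 2 * (m - c) * (y i - m) + (m - c) ^ 2) := by
        rw [sum_add_distrib, sum_add_distrib, ← mul_sum, hdev, sum_const, nsmul_eq_mul]
        simp [sse, m]
    _ = ∑ i ∈ A, (y i - c) ^ 2 := sum_congr rfl fun i _ => by ring

lemma sum_sse_le_sse_of_pairwiseDisjoint {ι : Type*} {N : ℕ} (y : Fin N → ℝ) {V : Finset ι}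
    {u : ι → Finset (Fin N)} (hu : (V : Set ι).PairwiseDisjoint u) {B : Finset (Fin N)}
    (huB : ∀ v ∈ V, u v ⊆ B) :
    ∑ v ∈ V, sse y (u v) ≤ sse y B := by
  set c := (∑ j ∈ B, y j) / (B.card : ℝ)
  calc ∑ v ∈ V, sse y (u v) ≤ ∑ v ∈ V, ∑ i ∈ u v, (y i - c) ^ 2 :=
        sum_le_sum fun v _ => sse_le_sum_sq_sub y (u v) c
    _ = ∑ i ∈ V.biUnion u, (y i - c) ^ 2 := (sum_biUnion hu).symm
    _ ≤ ∑ i ∈ B, (y i - c) ^ 2 :=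
        sum_le_sum_of_subset_of_nonneg (biUnion_subset.mpr huB) fun _ _ _ => sq_nonneg _
    _ = sse y B := rfl

lemma sum_sse_le_sum_sse_of_forall_exists_subset {ι : Type*} {N : ℕ} (y : Fin N → ℝ)
    {V : Finset ι} {u : ι → Finset (Fin N)} (hu : (V : Set ι).PairwiseDisjoint u)
    {Q : Finset (Finset (Fin N))} (huQ : ∀ v ∈ V, ∃ B ∈ Q, u v ⊆ B) :
    ∑ v ∈ V, sse y (u v) ≤ ∑ B ∈ Q, sse y B := by
  classical
  choose! f hfQ hfu using huQ
  rw [← sum_fiberwise_of_maps_to hfQ]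
  refine sum_le_sum fun B _ => sum_sse_le_sse_of_pairwiseDisjoint y (hu.subset ?_) ?_
  · exact coe_subset.mpr (filter_subset _ _)
  · intro v hv
    obtain ⟨hvV, rfl⟩ := mem_filter.mp hv
    exact hfu v hvV

lemma FeatureConsistent.exists_mem_sdiff_filter_subset {N M : ℕ} {x : Fin N → Fin M → Bool}
    {P : Finset (Finset (Fin N))} (hPx : FeatureConsistent x P) (hcov : P.biUnion id = univ)
    (F : Finset (Finset (Fin N))) {v : Fin M → Bool}
    (hv : v ∈ (univ \ F.biUnion id).image x) :
    ∃ B ∈ P \ F, (univ \ F.biUnion id).filter (fun i => x i = v) ⊆ B := by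
  obtain ⟨i, hiS, rfl⟩ := mem_image.mp hv
  obtain ⟨B, hBP, hiB⟩ := mem_biUnion.mp (hcov ▸ mem_univ i)
  have hBF : B ∉ F := fun hBF => (mem_sdiff.mp hiS).2 (mem_biUnion.mpr ⟨B, hBF, hiB⟩)
  exact ⟨B, mem_sdiff.mpr ⟨hBP, hBF⟩,
    fun j hj => hPx i j (mem_filter.mp hj).2.symm B hBP hiB⟩

theorem equivalent_points_lower_bound_general
    {N M : ℕ} (x : Fin N → Fin M → Bool) (y : Fin N → ℝ)
    (lam : ℝ) (hlam : 0 ≤ lam)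
    (P : Finset (Finset (Fin N))) (hP : IsPartitionOn Finset.univ P)
    (hPx : FeatureConsistent x P)
    (F : Finset (Finset (Fin N))) (hF : F ⊆ P)
    (H : ℕ) (hH : H + 1 ≤ P.card) :
    (1 / (N : ℝ)) * ∑ B ∈ F, sse y B + lam * (H : ℝ) + lam
      + (1 / (N : ℝ)) * ∑ v ∈ (Finset.univ \ F.biUnion id).image x,
          sse y ((Finset.univ \ F.biUnion id).filter (fun i => x i = v))
      ≤ Robj y lam P := by
  have hclasses :
      ∑ v ∈ (univ \ F.biUnion id).image x, sse y ((univ \ F.biUnion id).filter (x · = v))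
        ≤ ∑ B ∈ P \ F, sse y B :=
    sum_sse_le_sum_sse_of_forall_exists_subset y (Set.pairwiseDisjoint_filter x _ _)
      fun _ hv => hPx.exists_mem_sdiff_filter_subset hP.2.2 F hv
  have hloss := mul_le_mul_of_nonneg_left hclasses (by positivity : (0 : ℝ) ≤ 1 / N)
  have hpenalty : lam * ((H : ℝ) + 1) ≤ lam * P.card :=
    mul_le_mul_of_nonneg_left (by exact_mod_cast hH) hlam
  rw [Robj, ← sum_sdiff hF]
  linarith

/-- **Equivalent Points Lower Bound.** For `λ ≥ 0`, a feature-consistent partition `P`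
of `Fin N`, a subset `F` of its blocks and `H` with `H + 1 ≤ |P|`: with
`S = Fin N \ ⋃ F` and the equivalent-point sets `u_v = {i ∈ S : x i = v}`,
`R(P) ≥ (1/N)·∑_{B∈F} SSE(B) + λ·H + λ + (1/N)·∑_v SSE(u_v)`. -/
theorem equivalent_points_lower_bound
    {N M : ℕ} (hN : 1 ≤ N) (x : Fin N → Fin M → Bool) (y : Fin N → ℝ)
    (lam : ℝ) (hlam : 0 ≤ lam)
    (P : Finset (Finset (Fin N))) (hP : IsPartitionOn Finset.univ P)
    (hPx : FeatureConsistent x P)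
    (F : Finset (Finset (Fin N))) (hF : F ⊆ P)
    (H : ℕ) (hH : H + 1 ≤ P.card) :
    (1 / (N : ℝ)) * ∑ B ∈ F, sse y B + lam * (H : ℝ) + lam
      + (1 / (N : ℝ)) * ∑ v ∈ (Finset.univ \ F.biUnion id).image x,
          sse y ((Finset.univ \ F.biUnion id).filter (fun i => x i = v))
      ≤ Robj y lam P :=
  equivalent_points_lower_bound_general x y lam hlam P hP hPx F hF H hH
end

section
/- Let λ ≥ 0, let P be a partition of Fin N, and let F be a proper subset of the set of blocks of P with K = |F|. Let S = Fin N minus the union of the blocks in F (S is nonempty since F is proper). Then R(P) ≥ (1/N)·∑_{B∈F} SSE(B) + λ·K + inf over integers C ≥ 1 of ( (1/N)·kMeans(C, S) + λ·C ). (k-Means Lower Bound: the objective of any child tree is at least the fixed-leaf contribution plus the best possible trade-off between the optimal one-dimensional C-means clustering loss of the targets captured by the splitting leaves and the leaf penalty λ·C.) -/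
open Finset

/-- Optimal 1D k-means objective: cluster the targets of the samples in `S` into `C` clusters. -/
noncomputable def kMeansObj {N : ℕ} (y : Fin N → ℝ) (C : ℕ) (S : Finset (Fin N)) : ℝ :=
  ⨅ (A : {i // i ∈ S} → Fin C) (z : Fin C → ℝ), ∑ i ∈ S.attach, (y i.1 - z (A i)) ^ 2

/-!
Keep the blocks of `F` and let `G = P \ F` be the remaining blocks; they partition `S` and
`R(P) = R(F) + R(G)`. Predicting on each point of `S` the mean of its block in `G` is a clustering
of `S` with `|G| ≥ 1` centers, so `kMeans(|G|, S) ≤ ∑_{B ∈ G} SSE(B)`, and the term `C = |G|`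
of the infimum is at most `R(G)`.
-/

noncomputable def blockMean {N : ℕ} (y : Fin N → ℝ) (B : Finset (Fin N)) : ℝ :=
  (∑ j ∈ B, y j) / (B.card : ℝ)

lemma sse_eq_sum_sq_sub_blockMean {N : ℕ} (y : Fin N → ℝ) (B : Finset (Fin N)) :
    sse y B = ∑ i ∈ B, (y i - blockMean y B) ^ 2 :=
  rfl

lemma Robj_sdiff_add {N : ℕ} (y : Fin N → ℝ) (lam : ℝ) {P F : Finset (Finset (Fin N))}
    (hF : F ⊆ P) : Robj y lam (P \ F) + Robj y lam F = Robj y lam P := by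
  rw [Robj, Robj, Robj, ← sum_sdiff hF, ← card_sdiff_add_card_eq_card hF]
  push_cast
  ring

namespace IsPartitionOn

variable {N : ℕ} {S : Finset (Fin N)} {P : Finset (Finset (Fin N))}

lemma sdiff (hP : IsPartitionOn S P) {F : Finset (Finset (Fin N))} (hF : F ⊆ P) :
    IsPartitionOn (S \ F.biUnion id) (P \ F) := by
  obtain ⟨hne, hdisj, hun⟩ := hP
  refine ⟨fun B hB => hne B (mem_sdiff.1 hB).1,
    fun B hB B' hB' => hdisj B (mem_sdiff.1 hB).1 B' (mem_sdiff.1 hB').1, ?_⟩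
  ext i
  simp only [mem_biUnion, mem_sdiff, id, ← hun]
  constructor
  · rintro ⟨B, ⟨hBP, hBF⟩, hiB⟩
    refine ⟨⟨B, hBP, hiB⟩, fun ⟨B', hB'F, hiB'⟩ => ?_⟩
    have hBB' : B ≠ B' := fun h => hBF (h ▸ hB'F)
    exact disjoint_left.1 (hdisj B hBP B' (hF hB'F) hBB') hiB hiB'
  · rintro ⟨⟨B, hBP, hiB⟩, hiF⟩
    exact ⟨B, ⟨hBP, fun hBF => hiF ⟨B, hBF, hiB⟩⟩, hiB⟩

def toFinpartition (hP : IsPartitionOn S P) : Finpartition S where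
  parts := P
  supIndep := supIndep_iff_pairwiseDisjoint.2 fun B hB B' hB' => hP.2.1 B hB B' hB'
  sup_parts := by rw [sup_eq_biUnion, hP.2.2]
  bot_notMem h := not_nonempty_empty (hP.1 ⊥ h)

end IsPartitionOn

section KMeans

variable {N : ℕ} (y : Fin N → ℝ)

lemma kMeansObj_nonneg (C : ℕ) (S : Finset (Fin N)) : 0 ≤ kMeansObj y C S :=
  Real.iInf_nonneg fun _ => Real.iInf_nonneg fun _ => sum_nonneg fun _ _ => sq_nonneg _

lemma kMeansObj_le {C : ℕ} {S : Finset (Fin N)} (A : {i // i ∈ S} → Fin C) (z : Fin C → ℝ) :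
    kMeansObj y C S ≤ ∑ i ∈ S.attach, (y i.1 - z (A i)) ^ 2 := by
  have hloss_nonneg (A : {i // i ∈ S} → Fin C) (z : Fin C → ℝ) :
      0 ≤ ∑ i ∈ S.attach, (y i.1 - z (A i)) ^ 2 :=
    sum_nonneg fun _ _ => sq_nonneg _
  refine (ciInf_le ⟨0, ?_⟩ A).trans (ciInf_le ⟨0, ?_⟩ z)
  · rintro _ ⟨A', rfl⟩
    exact Real.iInf_nonneg (hloss_nonneg A')
  · rintro _ ⟨z', rfl⟩
    exact hloss_nonneg A z'

lemma kMeansObj_le_of_card_image_le {C : ℕ} {S : Finset (Fin N)} (m : Fin N → ℝ)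
    (hm : #(S.image m) ≤ C) : kMeansObj y C S ≤ ∑ i ∈ S, (y i - m i) ^ 2 := by
  set T := S.image m
  let A : {i // i ∈ S} → Fin C := fun i => Fin.castLE hm (T.equivFin ⟨m i, mem_image_of_mem m i.2⟩)
  let z : Fin C → ℝ := fun k => if h : k.1 < #T then T.equivFin.symm ⟨k, h⟩ else 0
  have hz (i : {i // i ∈ S}) : z (A i) = m i := by simp [z, A]
  calc kMeansObj y C S ≤ ∑ i ∈ S.attach, (y i.1 - z (A i)) ^ 2 := kMeansObj_le y A z
    _ = ∑ i ∈ S, (y i - m i) ^ 2 := by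
      simp_rw [hz]
      exact sum_attach S fun i => (y i - m i) ^ 2

lemma Finpartition.kMeansObj_card_parts_le {S : Finset (Fin N)} (Q : Finpartition S) :
    kMeansObj y #Q.parts S ≤ ∑ B ∈ Q.parts, sse y B := by
  have hcard : #(S.image fun i => blockMean y (Q.part i)) ≤ #Q.parts := by
    refine (card_le_card fun x hx => ?_).trans (card_image_le (f := blockMean y))
    obtain ⟨i, hi, rfl⟩ := mem_image.1 hx
    exact mem_image_of_mem _ (Q.part_mem.2 hi)
  calc kMeansObj y #Q.parts S ≤ ∑ i ∈ S, (y i - blockMean y (Q.part i)) ^ 2 :=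
        kMeansObj_le_of_card_image_le y _ hcard
    _ = ∑ i ∈ Q.parts.biUnion id, (y i - blockMean y (Q.part i)) ^ 2 := by
        rw [Q.biUnion_parts]
    _ = ∑ B ∈ Q.parts, ∑ i ∈ B, (y i - blockMean y (Q.part i)) ^ 2 := sum_biUnion Q.disjoint
    _ = ∑ B ∈ Q.parts, sse y B := by
        refine sum_congr rfl fun B hB => ?_
        rw [sse_eq_sum_sq_sub_blockMean]
        exact sum_congr rfl fun i hi => by rw [Q.part_eq_of_mem hB hi]

lemma iInf_kMeansObj_add_le {lam : ℝ} (hlam : 0 ≤ lam) (S : Finset (Fin N)) {C : ℕ}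
    (hC : 1 ≤ C) :
    ⨅ C : {C : ℕ // 1 ≤ C}, ((1 / (N : ℝ)) * kMeansObj y C.1 S + lam * (C.1 : ℝ))
      ≤ (1 / (N : ℝ)) * kMeansObj y C S + lam * C := by
  refine ciInf_le ⟨0, ?_⟩ (⟨C, hC⟩ : {C : ℕ // 1 ≤ C})
  rintro _ ⟨C, rfl⟩
  have := kMeansObj_nonneg y C.1 S
  positivity

end KMeans

theorem kmeans_lower_bound_general
    {N : ℕ} (y : Fin N → ℝ) (lam : ℝ) (hlam : 0 ≤ lam)
    (P : Finset (Finset (Fin N))) (hP : IsPartitionOn Finset.univ P)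
    (F : Finset (Finset (Fin N))) (hF : F ⊂ P) :
    (1 / (N : ℝ)) * ∑ B ∈ F, sse y B + lam * (F.card : ℝ)
      + ⨅ C : {C : ℕ // 1 ≤ C},
          ((1 / (N : ℝ)) * kMeansObj y C.1 (Finset.univ \ F.biUnion id) + lam * (C.1 : ℝ))
      ≤ Robj y lam P := by
  set G := P \ F
  have hG : IsPartitionOn (univ \ F.biUnion id) G := hP.sdiff hF.subset
  have hG_card : 1 ≤ #G := card_pos.2 (sdiff_nonempty.2 hF.not_subset)
  calc Robj y lam F + _
      ≤ Robj y lam F + ((1 / (N : ℝ)) * kMeansObj y #G (univ \ F.biUnion id) + lam * #G) :=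
        add_le_add le_rfl (iInf_kMeansObj_add_le y hlam _ hG_card)
    _ ≤ Robj y lam F + Robj y lam G := by
        gcongr
        rw [Robj]
        gcongr
        exact hG.toFinpartition.kMeansObj_card_parts_le y
    _ = Robj y lam P := by rw [add_comm, Robj_sdiff_add y lam hF.subset]

/-- **k-Means Lower Bound.** For `λ ≥ 0`, a partition `P` of `Fin N` and a proper subset
`F` of its blocks with `K = |F|`, letting `S = Fin N \ ⋃ F`,
`R(P) ≥ (1/N)·∑_{B∈F} SSE(B) + λ·K + inf_{C ≥ 1} ((1/N)·kMeans(C,S) + λ·C)`. -/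
theorem kmeans_lower_bound
    {N : ℕ} (hN : 1 ≤ N) (y : Fin N → ℝ) (lam : ℝ) (hlam : 0 ≤ lam)
    (P : Finset (Finset (Fin N))) (hP : IsPartitionOn Finset.univ P)
    (F : Finset (Finset (Fin N))) (hF : F ⊂ P) :
    (1 / (N : ℝ)) * ∑ B ∈ F, sse y B + lam * (F.card : ℝ)
      + ⨅ C : {C : ℕ // 1 ≤ C},
          ((1 / (N : ℝ)) * kMeansObj y C.1 (Finset.univ \ F.biUnion id) + lam * (C.1 : ℝ))
      ≤ Robj y lam P :=
  kmeans_lower_bound_general y lam hlam P hP F hF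
end

section
/- Fix N ≥ 1, features x : Fin N → (Fin M → Bool), targets y : Fin N → ℝ, and an integer C ≥ 1. Let U be the (finite, nonempty) image of x; for each u ∈ U let F_u = {i : x i = u} be the fiber of equivalent points, let w_u = |F_u| and let v_u = (∑_{i∈F_u} y i)/|F_u|. Then ConskMeans(C, Fin N) = W(C) + ∑_{u∈U} ∑_{i∈F_u} (y i − v_u)², where W(C) is the weighted k-means objective for the modified dataset of |U| points v with weights w. (Constrained k-Means with equivalent points equals weighted k-Means on the modified dataset, up to the constant correction term equal to the total within-fiber sum of squared errors, which also equals ∑_i (y i)² − ∑_{u∈U} w_u·v_u².) -/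
open Finset

/-- Constrained 1D k-means objective: as `kMeansObj`, but points with identical feature
vectors must be assigned to the same cluster. -/
noncomputable def consKMeans {N M : ℕ} (x : Fin N → Fin M → Bool) (y : Fin N → ℝ)
    (C : ℕ) (S : Finset (Fin N)) : ℝ :=
  ⨅ (A : {A : {i // i ∈ S} → Fin C // ∀ i j, x i.1 = x j.1 → A i = A j})
    (z : Fin C → ℝ), ∑ i ∈ S.attach, (y i.1 - z (A.1 i)) ^ 2

/-- Weighted k-means objective for points `v` with (positive) weights `w` and `C` clusters. -/
noncomputable def wKMeans {ι : Type*} [Fintype ι] (v w : ι → ℝ) (C : ℕ) : ℝ :=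
  ⨅ (A : ι → Fin C) (z : Fin C → ℝ), ∑ j, w j * (v j - z (A j)) ^ 2

/-! Equivalent points must share a cluster, so a constrained assignment is the same thing as an
assignment of the fibers of `x`. On a fiber `F` with mean `v`, the bias–variance identity
`∑ i ∈ F, (y i - c) ^ 2 = |F| * (v - c) ^ 2 + ∑ i ∈ F, (y i - v) ^ 2` turns the cost of `F` into
the weighted cost of the single point `v` plus a term independent of the clustering, which then
passes through both infima since all costs are nonnegative. -/

theorem Finset.sum_sub_sq_eq_card_mul_sq_add {ι : Type*} (s : Finset ι) (f : ι → ℝ) (c : ℝ) :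
    ∑ i ∈ s, (f i - c) ^ 2
      = s.card * ((∑ i ∈ s, f i) / s.card - c) ^ 2
        + ∑ i ∈ s, (f i - (∑ j ∈ s, f j) / s.card) ^ 2 := by
  rcases s.eq_empty_or_nonempty with rfl | hs
  · simp
  set m := (∑ j ∈ s, f j) / s.card
  have hcard : (s.card : ℝ) * m = ∑ j ∈ s, f j := mul_div_cancel₀ _ (by positivity)
  have hdev : ∑ i ∈ s, (f i - m) = 0 := by
    rw [sum_sub_distrib, sum_const, nsmul_eq_mul, hcard, sub_self]
  calc ∑ i ∈ s, (f i - c) ^ 2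
      = ∑ i ∈ s, ((f i - m) ^ 2 + 2 * (m - c) * (f i - m) + (m - c) ^ 2) :=
        sum_congr rfl fun i _ => by ring
    _ = s.card * (m - c) ^ 2 + ∑ i ∈ s, (f i - m) ^ 2 := by
        rw [sum_add_distrib, sum_add_distrib, ← mul_sum, hdev, sum_const, nsmul_eq_mul]
        ring

theorem sum_sq_sub_comp_eq_weighted_add_sum_sse {N : ℕ} {α : Type*} [DecidableEq α]
    (x : Fin N → α) (y : Fin N → ℝ) (g : {u // u ∈ univ.image x} → ℝ) :
    ∑ i, (y i - g ⟨x i, mem_image_of_mem x (mem_univ i)⟩) ^ 2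
      = ∑ u : {u // u ∈ univ.image x}, ((univ.filter (fun i => x i = u.1)).card : ℝ) *
            ((∑ i ∈ univ.filter (fun i => x i = u.1), y i)
              / (univ.filter (fun i => x i = u.1)).card - g u) ^ 2
        + ∑ u ∈ univ.image x, sse y (univ.filter (fun i => x i = u)) := by
  set x' : Fin N → {u // u ∈ univ.image x} := fun i => ⟨x i, mem_image_of_mem x (mem_univ i)⟩
  have hfiber (u : {u // u ∈ univ.image x}) :
      univ.filter (fun i => x' i = u) = univ.filter (fun i => x i = u.1) := by
    simp only [x', Subtype.ext_iff]
  rw [← sum_fiberwise univ x', ← sum_coe_sort (univ.image x), ← sum_add_distrib]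
  refine sum_congr rfl fun u _ => ?_
  rw [hfiber, sse, ← Finset.sum_sub_sq_eq_card_mul_sq_add]
  exact sum_congr rfl fun i hi =>
    congrArg (fun v => (y i - g v) ^ 2) (Subtype.ext (mem_filter.mp hi).2)

theorem ciInf₂_add_const_of_le {ι κ : Type*} [Nonempty ι] [Nonempty κ] {f : ι → κ → ℝ} {b : ℝ}
    (hb : ∀ i j, b ≤ f i j) (c : ℝ) :
    ⨅ i, ⨅ j, (f i j + c) = (⨅ i, ⨅ j, f i j) + c := by
  have hbdd (i : ι) : BddBelow (Set.range (f i)) := ⟨b, Set.forall_mem_range.mpr (hb i)⟩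
  have hbdd' : BddBelow (Set.range fun i => ⨅ j, f i j) :=
    ⟨b, Set.forall_mem_range.mpr fun i => le_ciInf (hb i)⟩
  simp only [← OrderIso.addRight_apply, OrderIso.map_ciInf _ hbdd', OrderIso.map_ciInf _ (hbdd _)]

theorem cons_kmeans_eq_weighted_kmeans_general
    {N M : ℕ} (x : Fin N → Fin M → Bool) (y : Fin N → ℝ)
    (C : ℕ) (hC : 1 ≤ C) :
    consKMeans x y C Finset.univ
      = wKMeans
          (fun u : {u // u ∈ Finset.univ.image x} =>
            (∑ i ∈ Finset.univ.filter (fun i => x i = u.1), y i)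
              / ((Finset.univ.filter (fun i => x i = u.1)).card : ℝ))
          (fun u : {u // u ∈ Finset.univ.image x} =>
            ((Finset.univ.filter (fun i => x i = u.1)).card : ℝ)) C
        + ∑ u ∈ Finset.univ.image x,
            ∑ i ∈ Finset.univ.filter (fun i => x i = u),
              (y i - (∑ j ∈ Finset.univ.filter (fun j => x j = u), y j)
                  / ((Finset.univ.filter (fun j => x j = u)).card : ℝ)) ^ 2 := by
  have : Nonempty (Fin C) := ⟨⟨0, hC⟩⟩
  let lift (B : {u // u ∈ univ.image x} → Fin C) :
      {A : {i // i ∈ (univ : Finset (Fin N))} → Fin C // ∀ i j, x i.1 = x j.1 → A i = A j} :=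
    ⟨fun i => B ⟨x i, mem_image_of_mem x (mem_univ _)⟩, fun _ _ h => congrArg B (Subtype.ext h)⟩
  have hlift : lift.Surjective := fun A => by
    obtain ⟨B, hB⟩ := (Function.factorsThrough_iff _).mp fun i j h => A.2 i j h
    exact ⟨fun u => B u.1, Subtype.ext hB.symm⟩
  rw [consKMeans, wKMeans, ← hlift.iInf_comp, ← ciInf₂_add_const_of_le (b := 0)]
  · refine iInf_congr fun B => iInf_congr fun z => ?_
    rw [sum_attach univ fun i => (y i - z (B ⟨x i, mem_image_of_mem x (mem_univ _)⟩)) ^ 2]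
    exact sum_sq_sub_comp_eq_weighted_add_sum_sse x y (z ∘ B)
  · exact fun B z => sum_nonneg fun u _ => by positivity

/-- **Constrained k-Means with equivalent points equals weighted k-Means** on the
modified dataset (one weighted point per fiber of equivalent points), up to the
constant correction term equal to the total within-fiber sum of squared errors. -/
theorem cons_kmeans_eq_weighted_kmeans
    {N M : ℕ} (hN : 1 ≤ N) (x : Fin N → Fin M → Bool) (y : Fin N → ℝ)
    (C : ℕ) (hC : 1 ≤ C) :
    consKMeans x y C Finset.univ
      = wKMeans
          (fun u : {u // u ∈ Finset.univ.image x} =>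
            (∑ i ∈ Finset.univ.filter (fun i => x i = u.1), y i)
              / ((Finset.univ.filter (fun i => x i = u.1)).card : ℝ))
          (fun u : {u // u ∈ Finset.univ.image x} =>
            ((Finset.univ.filter (fun i => x i = u.1)).card : ℝ)) C
        + ∑ u ∈ Finset.univ.image x,
            ∑ i ∈ Finset.univ.filter (fun i => x i = u),
              (y i - (∑ j ∈ Finset.univ.filter (fun j => x j = u), y j)
                  / ((Finset.univ.filter (fun j => x j = u)).card : ℝ)) ^ 2 :=
  cons_kmeans_eq_weighted_kmeans_general x y C hC
end

section
/- Fix N ≥ 1, features x : Fin N → (Fin M → Bool), targets y : Fin N → ℝ, and an integer C ≥ 1. Let U be the image of x; for each u ∈ U let F_u = {i : x i = u}, w_u = |F_u|, and v_u = (∑_{i∈F_u} y i)/|F_u|. Suppose an assignment Â : U → Fin C and centers ẑ : Fin C → ℝ attain the weighted k-means objective W(C) for the points (v_u) with weights (w_u), i.e. ∑_{u∈U} w_u·(v_u − ẑ(Â u))² = W(C). Then the induced assignment A : Fin N → Fin C defined by A i = Â(x i), together with the same centers ẑ, attains the constrained k-means objective: ∑_{i} (y i − ẑ(A i))² = ConskMeans(C,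 Fin N). (An optimal clustering of the modified weighted dataset directly provides an optimal clustering of the original dataset under the equivalent-points constraint.) -/
open Finset

/-! The within-fiber scatter of the targets does not depend on the clustering, and the
between-fiber part is exactly the weighted objective of the fiber means (weights the fiber
sizes); since constrained assignments are precisely those that factor through `x`, the
constrained cost of every clustering is a fixed constant plus its weighted cost. -/

theorem ciInf_eq_of_forall_le {ι α : Type*} [ConditionallyCompleteLattice α] {f : ι → α}
    (i : ι) (h : ∀ j, f i ≤ f j) : ⨅ j, f j = f i :=
  IsLeast.csInf_eq ⟨⟨i, rfl⟩, Set.forall_mem_range.2 h⟩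

theorem ciInf₂_eq_of_forall_le {ι κ α : Type*} [ConditionallyCompleteLattice α]
    {f : ι → κ → α} (i : ι) (k : κ) (h : ∀ j l, f i k ≤ f j l) :
    ⨅ j, ⨅ l, f j l = f i k := by
  have : Nonempty κ := ⟨k⟩
  have hi : ⨅ l, f i l = f i k := ciInf_eq_of_forall_le k (h i)
  rw [ciInf_eq_of_forall_le i fun j => hi ▸ le_ciInf (h j), hi]

theorem wKMeans_le {ι : Type*} [Fintype ι] {v w : ι → ℝ} (hw : ∀ j, 0 ≤ w j) (C : ℕ)
    (A : ι → Fin C) (z : Fin C → ℝ) :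
    wKMeans v w C ≤ ∑ j, w j * (v j - z (A j)) ^ 2 := by
  have cost_nonneg :
      ∀ (A : ι → Fin C) (z : Fin C → ℝ), 0 ≤ ∑ j, w j * (v j - z (A j)) ^ 2 :=
    fun A z => sum_nonneg fun j _ => mul_nonneg (hw j) (sq_nonneg _)
  refine (ciInf_le ⟨0, ?_⟩ A).trans (ciInf_le ⟨0, ?_⟩ z)
  · rintro _ ⟨A, rfl⟩
    exact Real.iInf_nonneg (cost_nonneg A)
  · rintro _ ⟨z, rfl⟩
    exact cost_nonneg A z

theorem sum_sq_sub_eq_sum_sq_sub_avg_add {ι : Type*} (s : Finset ι) (f : ι → ℝ) (c : ℝ) :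
    ∑ i ∈ s, (f i - c) ^ 2
      = ∑ i ∈ s, (f i - (∑ j ∈ s, f j) / #s) ^ 2
        + #s * ((∑ j ∈ s, f j) / #s - c) ^ 2 := by
  set m := (∑ j ∈ s, f j) / #s
  have hsum : ∑ j ∈ s, f j = #s * m := by
    rcases s.eq_empty_or_nonempty with rfl | hs
    · simp
    · exact (mul_div_cancel₀ _ (by exact_mod_cast hs.card_pos.ne')).symm
  have expand : ∀ i ∈ s,
      (f i - c) ^ 2 = (f i - m) ^ 2 + 2 * (m - c) * (f i - m) + (m - c) ^ 2 := fun i _ => by ring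
  rw [sum_congr rfl expand, sum_add_distrib, sum_add_distrib, ← mul_sum, sum_sub_distrib,
    sum_const, sum_const, hsum, nsmul_eq_mul, nsmul_eq_mul]
  ring

section Fibers

variable {ι α : Type*} [Fintype ι] [DecidableEq α] (x : ι → α)

theorem sum_sq_sub_eq_sum_fiber_scatter_add {β : Type*} (y : ι → ℝ)
    (B : {u // u ∈ univ.image x} → β) (z : β → ℝ) :
    ∑ i, (y i - z (B ⟨x i, mem_image_of_mem x (mem_univ i)⟩)) ^ 2
      = ∑ u : {u // u ∈ univ.image x}, ∑ i ∈ {i | x i = u.1},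
            (y i - (∑ j ∈ {j | x j = u.1}, y j) / #{j | x j = u.1}) ^ 2
        + ∑ u : {u // u ∈ univ.image x}, (#{i | x i = u.1} : ℝ)
            * ((∑ i ∈ {i | x i = u.1}, y i) / #{i | x i = u.1} - z (B u)) ^ 2 := by
  rw [← sum_add_distrib, ← sum_fiberwise_of_maps_to fun i _ => mem_image_of_mem x (mem_univ i),
    ← sum_coe_sort]
  refine sum_congr rfl fun u _ => ?_
  rw [← sum_sq_sub_eq_sum_sq_sub_avg_add]
  refine sum_congr rfl fun i hi => ?_
  rw [show (⟨x i, _⟩ : {u // u ∈ univ.image x}) = u from Subtype.ext (mem_filter.1 hi).2]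

theorem exists_comp_of_factorsThrough {β : Type*} {g : ι → β} (hg : g.FactorsThrough x) :
    ∃ B : {u // u ∈ univ.image x} → β,
      ∀ i, g i = B ⟨x i, mem_image_of_mem x (mem_univ i)⟩ := by
  have hrep : ∀ u : {u // u ∈ univ.image x}, ∃ i, x i = u.1 := fun u => by
    simpa using mem_image.1 u.2
  choose rep hrep using hrep
  exact ⟨fun u => g (rep u), fun i => hg (hrep ⟨x i, _⟩).symm⟩

end Fibers

theorem weighted_optimum_induces_constrained_optimum_general
    {N M : ℕ} (x : Fin N → Fin M → Bool) (y : Fin N → ℝ)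
    (C : ℕ)
    (Ahat : {u // u ∈ Finset.univ.image x} → Fin C) (zhat : Fin C → ℝ)
    (hopt : ∑ u : {u // u ∈ Finset.univ.image x},
        ((Finset.univ.filter (fun i => x i = u.1)).card : ℝ)
          * ((∑ i ∈ Finset.univ.filter (fun i => x i = u.1), y i)
                / ((Finset.univ.filter (fun i => x i = u.1)).card : ℝ)
              - zhat (Ahat u)) ^ 2
      = wKMeans
          (fun u : {u // u ∈ Finset.univ.image x} =>
            (∑ i ∈ Finset.univ.filter (fun i => x i = u.1), y i)
              / ((Finset.univ.filter (fun i => x i = u.1)).card : ℝ))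
          (fun u : {u // u ∈ Finset.univ.image x} =>
            ((Finset.univ.filter (fun i => x i = u.1)).card : ℝ)) C) :
    ∑ i : Fin N,
        (y i - zhat (Ahat ⟨x i, Finset.mem_image_of_mem x (Finset.mem_univ i)⟩)) ^ 2
      = consKMeans x y C Finset.univ := by
  let induced : {A : {i // i ∈ (univ : Finset (Fin N))} → Fin C //
      ∀ i j, x i.1 = x j.1 → A i = A j} :=
    ⟨fun i => Ahat ⟨x i.1, mem_image_of_mem x (mem_univ _)⟩,
      fun _ _ h => congrArg Ahat (Subtype.ext h)⟩
  rw [consKMeans, ciInf₂_eq_of_forall_le induced zhat]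
  · exact (sum_attach univ fun i => _).symm
  intro A z
  obtain ⟨B, hB⟩ := exists_comp_of_factorsThrough x (g := fun i => A.1 ⟨i, mem_univ i⟩)
    fun i j h => A.2 _ _ h
  have hA : ∀ i, A.1 i = B ⟨x i.1, mem_image_of_mem x (mem_univ _)⟩ := fun i => hB i
  simp only [hA]
  rw [sum_attach univ fun i => (y i - zhat (Ahat ⟨x i, mem_image_of_mem x (mem_univ i)⟩)) ^ 2,
    sum_attach univ fun i => (y i - z (B ⟨x i, mem_image_of_mem x (mem_univ i)⟩)) ^ 2,
    sum_sq_sub_eq_sum_fiber_scatter_add x y Ahat zhat,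
    sum_sq_sub_eq_sum_fiber_scatter_add x y B z, hopt]
  exact add_le_add_right (wKMeans_le (fun _ => Nat.cast_nonneg _) C B z) _

/-- **Optimal weighted clustering induces optimal constrained clustering.** If an
assignment `Â` of fibers to clusters together with centers `ẑ` attains the weighted
k-means objective on the modified dataset (fiber means with fiber sizes as weights),
then the induced assignment `A i = Â (x i)` with the same centers attains the
constrained k-means objective on the original dataset. -/
theorem weighted_optimum_induces_constrained_optimum
    {N M : ℕ} (hN : 1 ≤ N) (x : Fin N → Fin M → Bool) (y : Fin N → ℝ)
    (C : ℕ) (hC : 1 ≤ C)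
    (Ahat : {u // u ∈ Finset.univ.image x} → Fin C) (zhat : Fin C → ℝ)
    (hopt : ∑ u : {u // u ∈ Finset.univ.image x},
        ((Finset.univ.filter (fun i => x i = u.1)).card : ℝ)
          * ((∑ i ∈ Finset.univ.filter (fun i => x i = u.1), y i)
                / ((Finset.univ.filter (fun i => x i = u.1)).card : ℝ)
              - zhat (Ahat u)) ^ 2
      = wKMeans
          (fun u : {u // u ∈ Finset.univ.image x} =>
            (∑ i ∈ Finset.univ.filter (fun i => x i = u.1), y i)
              / ((Finset.univ.filter (fun i => x i = u.1)).card : ℝ))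
          (fun u : {u // u ∈ Finset.univ.image x} =>
            ((Finset.univ.filter (fun i => x i = u.1)).card : ℝ)) C) :
    ∑ i : Fin N,
        (y i - zhat (Ahat ⟨x i, Finset.mem_image_of_mem x (Finset.mem_univ i)⟩)) ^ 2
      = consKMeans x y C Finset.univ :=
  weighted_optimum_induces_constrained_optimum_general x y C Ahat zhat hopt
end

section
/- Let m ≥ 1, let v : Fin m → ℝ be points and w : Fin m → ℝ weights with w j > 0 for all j, and let W(C) denote the weighted k-means objective with C clusters. Then for every integer C ≥ 2, W(C−1) + W(C+1) ≥ 2·W(C). (Convexity of the weighted k-Means objective in the number of clusters: the loss reduction obtained by adding one more cluster is non-increasing in the number of clusters.) -/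
/-!
In one dimension a clustering costs at least as much as the clustering into the Voronoi cells of
its sorted centres, and those cells are the points lying between consecutive thresholds. So `W(K)`
is the least weight of a monotone `K`-step path of thresholds from `⊥` to `⊤`, where a step
`(a, b)` weighs the optimal cost of the points in `[a, b)`.

These weights satisfy the quadrangle inequality `g a b + g a' b' ≤ g a b' + g a' b` for
`a ≤ a' ≤ b ≤ b'`. Let `μ` and `ν` be the weighted means of `[a, b')` and `[a', b)`; if `μ ≤ ν`,
centre `[a, b)` at `μ` and `[a', b')` at `ν`: the points of `[b, b')` lie above `ν`, so they are
closer to `ν` than to `μ` (symmetrically if `ν ≤ μ`).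

Finally a `(K - 1)`-step and a `(K + 1)`-step path must cross, and exchanging their tails at the
crossing gives two `K`-step paths of no larger total weight.
-/

open Finset

noncomputable section

namespace WeightedKMeans

section MongePath

variable {α : Type*}

def pathCost (g : α → α → ℝ) (c : ℕ → α) (K : ℕ) : ℝ :=
  ∑ k ∈ range K, g (c k) (c (k + 1))

theorem pathCost_succ (g : α → α → ℝ) (c : ℕ → α) (n : ℕ) :
    pathCost g c (n + 1) = g (c 0) (c 1) + pathCost g (fun k => c (k + 1)) n := by
  rw [pathCost, sum_range_succ', add_comm]
  rfl

def consSeq (x : α) (c : ℕ → α) : ℕ → α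
  | 0 => x
  | k + 1 => c k

theorem pathCost_consSeq (g : α → α → ℝ) (x : α) (c : ℕ → α) (n : ℕ) :
    pathCost g (consSeq x c) (n + 1) = g x (c 0) + pathCost g c n :=
  pathCost_succ g _ n

theorem monotone_consSeq [Preorder α] {x : α} {c : ℕ → α} (hx : x ≤ c 0) (hc : Monotone c) :
    Monotone (consSeq x c) :=
  monotone_nat_of_le_succ fun
    | 0 => hx
    | k + 1 => hc k.le_succ

def QuadrangleIneq [Preorder α] (g : α → α → ℝ) : Prop :=
  ∀ ⦃a a' b b' : α⦄, a ≤ a' → a' ≤ b → b ≤ b' → g a b + g a' b' ≤ g a b' + g a' b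

/-- `q` starts one step ahead of `p` and ends one step behind it; the tails are exchanged at the
first `k` with `q (k + 2) ≤ p (k + 1)`. -/
theorem exists_pathCost_add_pathCost_le [LinearOrder α] {g : α → α → ℝ} (hg : QuadrangleIneq g)
    (n : ℕ) {p q : ℕ → α} (hp : Monotone p) (hq : Monotone q)
    (hstart : p 0 ≤ q 1) (hend : q (n + 2) ≤ p (n + 1)) :
    ∃ r s : ℕ → α, Monotone r ∧ Monotone s ∧ r 0 = p 0 ∧ s 0 = q 0 ∧
      r (n + 2) = q (n + 3) ∧ s (n + 2) = p (n + 1) ∧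
      pathCost g r (n + 2) + pathCost g s (n + 2) ≤
        pathCost g p (n + 1) + pathCost g q (n + 3) := by
  by_cases hcross : q 2 ≤ p 1
  · refine ⟨consSeq (p 0) fun k => q (k + 1 + 1), consSeq (q 0) (consSeq (q 1) fun k => p (k + 1)),
      monotone_consSeq (hstart.trans (hq one_le_two)) fun _ _ h => hq (by omega),
      monotone_consSeq (hq zero_le_one)
        (monotone_consSeq ((hq one_le_two).trans hcross) fun _ _ h => hp (by omega)),
      rfl, rfl, rfl, rfl, ?_⟩
    have hswap := hg hstart (hq one_le_two) hcross
    rw [pathCost_consSeq, pathCost_consSeq, pathCost_consSeq, pathCost_succ g p, pathCost_succ g q,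
      pathCost_succ g (fun k => q (k + 1))]
    simp only [consSeq, zero_add, Nat.reduceAdd]
    linarith
  cases n with
  | zero => exact absurd hend hcross
  | succ n =>
    obtain ⟨r, s, hr, hs, hr0, hs0, hrn, hsn, hrs⟩ :=
      exists_pathCost_add_pathCost_le hg n (p := fun k => p (k + 1)) (q := fun k => q (k + 1))
        (fun _ _ h => hp (by omega)) (fun _ _ h => hq (by omega)) (not_le.1 hcross).le hend
    refine ⟨consSeq (p 0) r, consSeq (q 0) s, monotone_consSeq (hr0 ▸ hp zero_le_one) hr,
      monotone_consSeq (hs0 ▸ hq zero_le_one) hs, rfl, rfl, hrn, hsn, ?_⟩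
    rw [pathCost_consSeq, pathCost_consSeq, pathCost_succ g p, pathCost_succ g q, hr0, hs0]
    linarith

end MongePath

section ClusterCost

variable {ι : Type*} (v w : ι → ℝ)

def clusterCost (s : Finset ι) (z : ℝ) : ℝ :=
  ∑ j ∈ s, w j * (v j - z) ^ 2

def weightedMean (s : Finset ι) : ℝ :=
  (∑ j ∈ s, w j * v j) / ∑ j ∈ s, w j

def minClusterCost (s : Finset ι) : ℝ :=
  clusterCost v w s (weightedMean v w s)

variable {v w} {s t : Finset ι}

theorem clusterCost_union [DecidableEq ι] (h : Disjoint s t) (z : ℝ) :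
    clusterCost v w (s ∪ t) z = clusterCost v w s z + clusterCost v w t z :=
  sum_union h

theorem clusterCost_mono (hw : ∀ j, 0 ≤ w j) {z z' : ℝ}
    (h : ∀ j ∈ s, (v j - z) ^ 2 ≤ (v j - z') ^ 2) : clusterCost v w s z ≤ clusterCost v w s z' :=
  sum_le_sum fun j hj => mul_le_mul_of_nonneg_left (h j hj) (hw j)

theorem clusterCost_eq_zero (hw : ∀ j, 0 ≤ w j) (hs : ∑ j ∈ s, w j = 0) (z : ℝ) :
    clusterCost v w s z = 0 := by
  rw [sum_eq_zero_iff_of_nonneg fun j _ => hw j] at hs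
  exact sum_eq_zero fun j hj => by rw [hs j hj, zero_mul]

theorem clusterCost_eq_minClusterCost_add (hs : ∑ j ∈ s, w j ≠ 0) (z : ℝ) :
    clusterCost v w s z =
      minClusterCost v w s + (∑ j ∈ s, w j) * (z - weightedMean v w s) ^ 2 := by
  have expand : ∀ z, clusterCost v w s z =
      ∑ j ∈ s, w j * v j ^ 2 - 2 * z * ∑ j ∈ s, w j * v j + z ^ 2 * ∑ j ∈ s, w j := fun z => by
    simp only [clusterCost, mul_sum, ← sum_sub_distrib, ← sum_add_distrib]
    exact sum_congr rfl fun j _ => by ring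
  rw [minClusterCost, expand, expand, weightedMean]
  field_simp
  ring

theorem minClusterCost_le (hw : ∀ j, 0 ≤ w j) (s : Finset ι) (z : ℝ) :
    minClusterCost v w s ≤ clusterCost v w s z := by
  rcases eq_or_ne (∑ j ∈ s, w j) 0 with hs | hs
  · rw [minClusterCost, clusterCost_eq_zero hw hs, clusterCost_eq_zero hw hs]
  · rw [clusterCost_eq_minClusterCost_add hs]
    exact le_add_of_nonneg_right (mul_nonneg (sum_nonneg fun j _ => hw j) (sq_nonneg _))

theorem weightedMean_le (hw : ∀ j, 0 ≤ w j) (hs : 0 < ∑ j ∈ s, w j) {x : ℝ}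
    (h : ∀ j ∈ s, v j ≤ x) : weightedMean v w s ≤ x := by
  rw [weightedMean, div_le_iff₀ hs, mul_sum]
  exact sum_le_sum fun j hj => by nlinarith [mul_le_mul_of_nonneg_left (h j hj) (hw j)]

theorem le_weightedMean (hw : ∀ j, 0 ≤ w j) (hs : 0 < ∑ j ∈ s, w j) {x : ℝ}
    (h : ∀ j ∈ s, x ≤ v j) : x ≤ weightedMean v w s := by
  rw [weightedMean, le_div_iff₀ hs, mul_sum]
  exact sum_le_sum fun j hj => by nlinarith [mul_le_mul_of_nonneg_left (h j hj) (hw j)]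

theorem minClusterCost_union_add_le [DecidableEq ι] (hw : ∀ j, 0 ≤ w j) {s₁ s₂ s₃ : Finset ι}
    (h₁₂ : Disjoint s₁ s₂) (h₂₃ : Disjoint s₂ s₃) (h₁₃ : Disjoint s₁ s₃)
    (hv₁₂ : ∀ i ∈ s₁, ∀ j ∈ s₂, v i ≤ v j) (hv₂₃ : ∀ i ∈ s₂, ∀ j ∈ s₃, v i ≤ v j) :
    minClusterCost v w (s₁ ∪ s₂) + minClusterCost v w (s₂ ∪ s₃) ≤
      minClusterCost v w (s₁ ∪ s₂ ∪ s₃) + minClusterCost v w s₂ := by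
  set μ := weightedMean v w (s₁ ∪ s₂ ∪ s₃)
  have split₁₂ := clusterCost_union (v := v) (w := w) h₁₂
  have split₂₃ := clusterCost_union (v := v) (w := w) h₂₃
  have split₁₂₃ : minClusterCost v w (s₁ ∪ s₂ ∪ s₃) =
      clusterCost v w s₁ μ + clusterCost v w s₂ μ + clusterCost v w s₃ μ := by
    rw [minClusterCost, clusterCost_union (disjoint_union_left.2 ⟨h₁₃, h₂₃⟩), split₁₂]
  have le₁₂ := minClusterCost_le (v := v) hw (s₁ ∪ s₂)
  have le₂₃ := minClusterCost_le (v := v) hw (s₂ ∪ s₃)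
  set ν := weightedMean v w s₂
  have hν : minClusterCost v w s₂ = clusterCost v w s₂ ν := rfl
  rcases (sum_nonneg fun j _ => hw j : 0 ≤ ∑ j ∈ s₂, w j).eq_or_lt with hs₂ | hs₂
  · have hzero := clusterCost_eq_zero (v := v) hw hs₂.symm
    linarith [le₁₂ μ, le₂₃ μ, split₁₂ μ, split₂₃ μ, hzero μ, hzero ν]
  rcases le_total μ ν with hμν | hνμ
  · have : clusterCost v w s₃ ν ≤ clusterCost v w s₃ μ := clusterCost_mono hw fun j hj => by
      have := weightedMean_le hw hs₂ fun i hi => hv₂₃ i hi j hj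
      exact sq_le_sq' (by linarith) (by linarith)
    linarith [le₁₂ μ, le₂₃ ν, split₁₂ μ, split₂₃ ν]
  · have : clusterCost v w s₁ ν ≤ clusterCost v w s₁ μ := clusterCost_mono hw fun j hj => by
      have := le_weightedMean hw hs₂ fun i hi => hv₁₂ j hj i hi
      nlinarith
    linarith [le₁₂ ν, le₂₃ μ, split₁₂ ν, split₂₃ μ]

end ClusterCost

section Cells

theorem exists_lt_mem_Ico_succ {α : Type*} [LinearOrder α] {c : ℕ → α} {x : α} (h0 : c 0 ≤ x) :
    ∀ {K : ℕ}, x < c K → ∃ k < K, x ∈ Set.Ico (c k) (c (k + 1))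
  | 0, hK => absurd h0 (not_le.2 hK)
  | K + 1, hK => by
    by_cases hx : x < c K
    · obtain ⟨k, hk, hmem⟩ := exists_lt_mem_Ico_succ h0 hx
      exact ⟨k, hk.trans K.lt_succ_self, hmem⟩
    · exact ⟨K, K.lt_succ_self, not_lt.1 hx, hK⟩

theorem exists_cellIndex {ι : Type*} {v : ι → ℝ} {K : ℕ} {c : ℕ → EReal} (hc : Monotone c)
    (h0 : c 0 = ⊥) (hK : c K = ⊤) :
    ∃ B : ι → Fin K, ∀ j k, B j = k ↔ (v j : EReal) ∈ Set.Ico (c k) (c (k + 1)) := by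
  choose k hk hmem using fun j =>
    exists_lt_mem_Ico_succ (c := c) (x := (v j : EReal)) (h0 ▸ bot_le) (hK ▸ EReal.coe_lt_top _)
  refine ⟨fun j => ⟨k j, hk j⟩, fun j t => ⟨fun h => h ▸ hmem j, fun h => ?_⟩⟩
  by_contra hne
  exact Set.disjoint_left.1 (hc.pairwise_disjoint_on_Ico_succ (Fin.val_injective.ne hne)) (hmem j) h

variable {ι : Type*} [Fintype ι] (v w : ι → ℝ)

/-- Thresholds live in `EReal` so that the outer cells `[⊥, c)` and `[c, ⊤)` are unbounded. -/
def cell (a b : EReal) : Finset ι :=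
  {j | (v j : EReal) ∈ Set.Ico a b}

def cellCost (a b : EReal) : ℝ :=
  minClusterCost v w (cell v a b)

variable {v w}

theorem cell_union_cell [DecidableEq ι] {a b c : EReal} (hab : a ≤ b) (hbc : b ≤ c) :
    cell v a b ∪ cell v b c = cell v a c := by
  ext j
  simp only [cell, mem_union, mem_filter, mem_univ, true_and, ← Set.mem_union,
    Set.Ico_union_Ico_eq_Ico hab hbc]

theorem disjoint_cell_cell {a b b' c : EReal} (hb : b ≤ b') :
    Disjoint (cell v a b) (cell v b' c) :=
  disjoint_filter.2 fun _ _ h₁ h₂ => (h₁.2.trans_le hb).not_ge h₂.1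

theorem le_of_mem_cell_of_mem_cell {a b b' c : EReal} (hb : b ≤ b') {i j : ι}
    (hi : i ∈ cell v a b) (hj : j ∈ cell v b' c) : v i ≤ v j := by
  simp only [cell, mem_filter, mem_univ, true_and, Set.mem_Ico] at hi hj
  exact_mod_cast (hi.2.trans_le (hb.trans hj.1)).le

variable (v) in
theorem quadrangleIneq_cellCost (hw : ∀ j, 0 ≤ w j) : QuadrangleIneq (cellCost v w) := by
  classical
  intro a a' b b' h₁ h₂ h₃
  have := minClusterCost_union_add_le (s₁ := cell v a a') (s₂ := cell v a' b) (s₃ := cell v b b') hw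
    (disjoint_cell_cell le_rfl) (disjoint_cell_cell le_rfl) (disjoint_cell_cell h₂)
    (fun i hi j hj => le_of_mem_cell_of_mem_cell le_rfl hi hj)
    (fun i hi j hj => le_of_mem_cell_of_mem_cell le_rfl hi hj)
  rwa [cell_union_cell h₁ h₂, cell_union_cell h₂ h₃, cell_union_cell (h₁.trans h₂) h₃] at this

theorem sum_sq_eq_sum_clusterCost_cell {K : ℕ} {c : ℕ → EReal} {B : ι → Fin K}
    (hB : ∀ j k, B j = k ↔ (v j : EReal) ∈ Set.Ico (c k) (c (k + 1))) (y : ℕ → ℝ) :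
    ∑ j, w j * (v j - y (B j)) ^ 2 =
      ∑ k ∈ range K, clusterCost v w (cell v (c k) (c (k + 1))) (y k) := by
  classical
  rw [← Fin.sum_univ_eq_sum_range, ← sum_fiberwise univ B]
  refine sum_congr rfl fun k _ => ?_
  have hcell : ({j | B j = k} : Finset ι) = cell v (c k) (c (k + 1)) := by
    ext j; simp [cell, hB]
  rw [← hcell, clusterCost]
  exact sum_congr rfl fun j hj => by rw [(mem_filter.1 hj).2]

end Cells

section Voronoi

def midpointCuts (y : ℕ → ℝ) (n : ℕ) : ℕ → EReal
  | 0 => ⊥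
  | k + 1 => if k < n then ((y k + y (k + 1)) / 2 : ℝ) else ⊤

variable {y : ℕ → ℝ} {n : ℕ}

theorem midpointCuts_self_add_one : midpointCuts y n (n + 1) = ⊤ := by
  simp [midpointCuts]

theorem monotone_midpointCuts (hy : Monotone y) : Monotone (midpointCuts y n) := by
  refine monotone_nat_of_le_succ fun
    | 0 => bot_le
    | k + 1 => ?_
  simp only [midpointCuts]
  split_ifs with h₁ h₂ h₂
  · exact EReal.coe_le_coe_iff.2 (by linarith [hy k.le_succ, hy (k + 1).le_succ])
  · exact le_top
  · omega
  · exact le_rfl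

theorem sq_sub_le_of_mem_Ico_midpointCuts (hy : Monotone y) {k t : ℕ} (hk : k ≤ n) (ht : t ≤ n)
    {x : ℝ} (hx : (x : EReal) ∈ Set.Ico (midpointCuts y n k) (midpointCuts y n (k + 1))) :
    (x - y k) ^ 2 ≤ (x - y t) ^ 2 := by
  rcases lt_trichotomy t k with htk | rfl | hkt
  · obtain ⟨k, rfl⟩ : ∃ k', k = k' + 1 := ⟨k - 1, by omega⟩
    have hmid : (y k + y (k + 1)) / 2 ≤ x := by
      simpa [midpointCuts, show k < n by omega] using hx.1
    nlinarith [hy (show t ≤ k by omega), hy k.le_succ]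
  · exact le_rfl
  · have hmid : x < (y k + y (k + 1)) / 2 := by
      simpa [midpointCuts, show k < n by omega] using hx.2
    nlinarith [hy (show k + 1 ≤ t by omega), hy k.le_succ]

theorem exists_monotone_enum (z : Fin (n + 1) → ℝ) :
    ∃ y : ℕ → ℝ, Monotone y ∧ ∀ i, ∃ t ≤ n, y t = z i := by
  refine ⟨fun k => z (Tuple.sort z (Fin.clamp k n)), fun a b hab => Tuple.monotone_sort z ?_,
    fun i => ⟨Tuple.sort z |>.symm i, Nat.lt_succ_iff.1 (Tuple.sort z |>.symm i).2, ?_⟩⟩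
  · simp only [Fin.le_def, Fin.clamp]
    omega
  · have : Fin.clamp ((Tuple.sort z).symm i) n = (Tuple.sort z).symm i :=
      Fin.ext (min_eq_left (Nat.lt_succ_iff.1 ((Tuple.sort z).symm i).2))
    simp [this]

end Voronoi

section KMeans

variable {ι : Type*} [Fintype ι] (v : ι → ℝ) {w : ι → ℝ}

theorem wKMeans_le_sum (hw : ∀ j, 0 ≤ w j) {K : ℕ} (A : ι → Fin K) (z : Fin K → ℝ) :
    wKMeans v w K ≤ ∑ j, w j * (v j - z (A j)) ^ 2 := by
  have cost_nonneg : ∀ (A : ι → Fin K) (z : Fin K → ℝ), 0 ≤ ∑ j, w j * (v j - z (A j)) ^ 2 :=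
    fun A z => sum_nonneg fun j _ => mul_nonneg (hw j) (sq_nonneg _)
  refine (ciInf_le ⟨0, ?_⟩ A).trans (ciInf_le ⟨0, ?_⟩ z)
  · rintro _ ⟨A, rfl⟩
    exact Real.iInf_nonneg (cost_nonneg A)
  · rintro _ ⟨z, rfl⟩
    exact cost_nonneg A z

theorem wKMeans_le_pathCost (hw : ∀ j, 0 ≤ w j) {K : ℕ} {c : ℕ → EReal} (hc : Monotone c)
    (h0 : c 0 = ⊥) (hK : c K = ⊤) : wKMeans v w K ≤ pathCost (cellCost v w) c K := by
  obtain ⟨B, hB⟩ := exists_cellIndex hc h0 hK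
  let μ k := weightedMean v w (cell v (c k) (c (k + 1)))
  calc wKMeans v w K ≤ ∑ j, w j * (v j - μ (B j)) ^ 2 := wKMeans_le_sum v hw B fun k => μ k
    _ = pathCost (cellCost v w) c K := sum_sq_eq_sum_clusterCost_cell hB μ

theorem exists_pathCost_le_sum (hw : ∀ j, 0 ≤ w j) {n : ℕ} (A : ι → Fin (n + 1))
    (z : Fin (n + 1) → ℝ) :
    ∃ c : ℕ → EReal, Monotone c ∧ c 0 = ⊥ ∧ c (n + 1) = ⊤ ∧
      pathCost (cellCost v w) c (n + 1) ≤ ∑ j, w j * (v j - z (A j)) ^ 2 := by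
  obtain ⟨y, hy, hyz⟩ := exists_monotone_enum z
  have hc := monotone_midpointCuts (n := n) hy
  obtain ⟨B, hB⟩ := exists_cellIndex (v := v) hc rfl midpointCuts_self_add_one
  refine ⟨_, hc, rfl, midpointCuts_self_add_one, ?_⟩
  set c := midpointCuts y n
  calc pathCost (cellCost v w) c (n + 1)
      ≤ ∑ k ∈ range (n + 1), clusterCost v w (cell v (c k) (c (k + 1))) (y k) :=
        sum_le_sum fun k _ => minClusterCost_le hw _ _
    _ = ∑ j, w j * (v j - y (B j)) ^ 2 := (sum_sq_eq_sum_clusterCost_cell hB y).symm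
    _ ≤ ∑ j, w j * (v j - z (A j)) ^ 2 := sum_le_sum fun j _ => by
      obtain ⟨t, ht, hyt⟩ := hyz (A j)
      rw [← hyt]
      exact mul_le_mul_of_nonneg_left (sq_sub_le_of_mem_Ico_midpointCuts hy
        (Nat.lt_succ_iff.1 (B j).2) ht ((hB j (B j)).1 rfl)) (hw j)

end KMeans

end WeightedKMeans

end

open WeightedKMeans

theorem weighted_kmeans_convex_in_clusters_general
    {m : ℕ} (v w : Fin m → ℝ) (hw : ∀ j, 0 < w j)
    (C : ℕ) (hC : 2 ≤ C) :
    2 * wKMeans v w C ≤ wKMeans v w (C - 1) + wKMeans v w (C + 1) := by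
  obtain ⟨n, rfl⟩ : ∃ n, C = n + 2 := ⟨C - 2, by omega⟩
  rw [show n + 2 - 1 = n + 1 by omega]
  have hw' : ∀ j, 0 ≤ w j := fun j => (hw j).le
  refine le_ciInf_add_ciInf fun A₁ A₂ => le_ciInf_add_ciInf fun z₁ z₂ => ?_
  obtain ⟨p, hp, hp0, hpn, hpA⟩ := exists_pathCost_le_sum v hw' A₁ z₁
  obtain ⟨q, hq, hq0, hqn, hqA⟩ := exists_pathCost_le_sum v hw' A₂ z₂
  obtain ⟨r, s, hr, hs, hr0, hs0, hrn, hsn, hrs⟩ :=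
    exists_pathCost_add_pathCost_le (quadrangleIneq_cellCost v hw') n hp hq
      (hp0 ▸ bot_le) (hpn ▸ le_top)
  have hr' := wKMeans_le_pathCost v hw' hr (hr0.trans hp0) (hrn.trans hqn)
  have hs' := wKMeans_le_pathCost v hw' hs (hs0.trans hq0) (hsn.trans hpn)
  linarith

/-- **Convexity of the weighted k-means objective in the number of clusters:**
for `C ≥ 2`, `W(C−1) + W(C+1) ≥ 2·W(C)`. -/
theorem weighted_kmeans_convex_in_clusters
    {m : ℕ} (hm : 1 ≤ m) (v w : Fin m → ℝ) (hw : ∀ j, 0 < w j)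
    (C : ℕ) (hC : 2 ≤ C) :
    2 * wKMeans v w C ≤ wKMeans v w (C - 1) + wKMeans v w (C + 1) :=
  weighted_kmeans_convex_in_clusters_general v w hw C hC
end

section
/- Let λ ≥ 0 and R^c ∈ ℝ with R^c ≥ 0. Let S be a subset of Fin N with both S and its complement nonempty, let P_L be a partition of S, let P_R be a partition of the complement of S, and let P = P_L ∪ P_R (a partition of Fin N). For a partition Q of a subset, write R_sub(Q) = (1/N)·∑_{B∈Q} SSE(B) + λ·|Q|. Then R(P) = R_sub(P_L) + R_sub(P_R); consequently, if R_sub(P_L) > R^c, or R_sub(P_R) > R^c, or R_sub(P_L) + R_sub(P_R) > R^c, then R(P) > R^c. (Hierarchical Objective Lower Bound for Sub-trees: a tree whose root split produces a left subtree and a right subtree has objective equal to the sum of the two sub-objectives, so it can be pruned whenever either sub-objective, or their sum, exceeds the current best objective R^c.) -/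
open Finset

/-- Regularized objective of a partition of a subset (a sub-tree). -/
noncomputable def Rsub {N : ℕ} (y : Fin N → ℝ) (lam : ℝ) (Q : Finset (Finset (Fin N))) : ℝ :=
  (1 / (N : ℝ)) * ∑ B ∈ Q, sse y B + lam * (Q.card : ℝ)

/-! The objective is additive over blocks, and the blocks of `P_L` and `P_R` are distinct because
they lie in the disjoint sets `S` and `Sᶜ`; hence `R(P_L ∪ P_R) = R_sub(P_L) + R_sub(P_R)`.
With `λ ≥ 0` both sub-objectives are nonnegative, so each of them, and their sum, is a lower
bound for `R(P_L ∪ P_R)`. -/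

section

variable {N : ℕ} {S T : Finset (Fin N)} {P Q : Finset (Finset (Fin N))}

theorem IsPartitionOn.subset_of_mem (hP : IsPartitionOn S P) {B : Finset (Fin N)} (hB : B ∈ P) :
    B ⊆ S :=
  hP.2.2 ▸ subset_biUnion_of_mem id hB

theorem IsPartitionOn.disjoint (hP : IsPartitionOn S P) (hQ : IsPartitionOn T Q)
    (hST : Disjoint S T) : Disjoint P Q := by
  refine disjoint_left.mpr fun B hBP hBQ => ?_
  obtain ⟨x, hx⟩ := hP.1 B hBP
  exact disjoint_left.mp hST (hP.subset_of_mem hBP hx) (hQ.subset_of_mem hBQ hx)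

end

theorem sse_nonneg {N : ℕ} (y : Fin N → ℝ) (B : Finset (Fin N)) : 0 ≤ sse y B :=
  sum_nonneg fun _ _ => sq_nonneg _

theorem Rsub_nonneg {N : ℕ} (y : Fin N → ℝ) {lam : ℝ} (hlam : 0 ≤ lam)
    (Q : Finset (Finset (Fin N))) : 0 ≤ Rsub y lam Q := by
  have := sum_nonneg fun B (_ : B ∈ Q) => sse_nonneg y B
  unfold Rsub
  positivity

theorem Robj_union {N : ℕ} (y : Fin N → ℝ) (lam : ℝ) {P Q : Finset (Finset (Fin N))}
    (hPQ : Disjoint P Q) : Robj y lam (P ∪ Q) = Rsub y lam P + Rsub y lam Q := by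
  unfold Robj Rsub
  rw [sum_union hPQ, card_union_of_disjoint hPQ]
  push_cast
  ring

theorem hierarchical_lower_bound_subtrees_general
    {N : ℕ} (y : Fin N → ℝ) (lam : ℝ) (hlam : 0 ≤ lam)
    (Rc : ℝ)
    (S : Finset (Fin N))
    (PL PR : Finset (Finset (Fin N)))
    (hPL : IsPartitionOn S PL) (hPR : IsPartitionOn Sᶜ PR) :
    Robj y lam (PL ∪ PR) = Rsub y lam PL + Rsub y lam PR ∧
    ((Rsub y lam PL > Rc ∨ Rsub y lam PR > Rc ∨ Rsub y lam PL + Rsub y lam PR > Rc) →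
      Robj y lam (PL ∪ PR) > Rc) := by
  have hsplit := Robj_union y lam (hPL.disjoint hPR disjoint_compl_right)
  have hL := Rsub_nonneg y hlam PL
  have hR := Rsub_nonneg y hlam PR
  refine ⟨hsplit, fun h => ?_⟩
  rw [hsplit]
  rcases h with h | h | h <;> linarith

/-- **Hierarchical Objective Lower Bound for Sub-trees.** If `P_L` partitions `S` and
`P_R` partitions `Sᶜ` (both nonempty), then `R(P_L ∪ P_R) = R_sub(P_L) + R_sub(P_R)`;
consequently if either sub-objective or their sum exceeds `R^c`, then so does the
objective of the whole tree. -/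
theorem hierarchical_lower_bound_subtrees
    {N : ℕ} (hN : 1 ≤ N) (y : Fin N → ℝ) (lam : ℝ) (hlam : 0 ≤ lam)
    (Rc : ℝ) (hRc : 0 ≤ Rc)
    (S : Finset (Fin N)) (hS : S.Nonempty) (hSc : Sᶜ.Nonempty)
    (PL PR : Finset (Finset (Fin N)))
    (hPL : IsPartitionOn S PL) (hPR : IsPartitionOn Sᶜ PR) :
    Robj y lam (PL ∪ PR) = Rsub y lam PL + Rsub y lam PR ∧
    ((Rsub y lam PL > Rc ∨ Rsub y lam PR > Rc ∨ Rsub y lam PL + Rsub y lam PR > Rc) →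
      Robj y lam (PL ∪ PR) > Rc) :=
  hierarchical_lower_bound_subtrees_general y lam hlam Rc S PL PR hPL hPR
end

section
/- Let λ > 0 and R^c ≥ 0. Let P be a feature-consistent partition of Fin N (with binary features x : Fin N → (Fin M → Bool)) satisfying R(P) ≤ R^c. Then |P| ≤ min(⌊R^c/λ⌋, 2^M). (Upper Bound on the Number of Leaves: any tree whose objective does not exceed the current best objective R^c has at most ⌊R^c/λ⌋ leaves, and a tree over M binary features can have at most 2^M leaves.) -/
open Finset

theorem mul_card_le_Robj {N : ℕ} (y : Fin N → ℝ) (lam : ℝ) (P : Finset (Finset (Fin N))) :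
    lam * P.card ≤ Robj y lam P := by
  have hmse : 0 ≤ (1 / (N : ℝ)) * ∑ B ∈ P, sse y B :=
    mul_nonneg (by positivity) (sum_nonneg fun B _ => sse_nonneg y B)
  unfold Robj
  linarith

theorem card_le_floor_div_of_Robj_le {N : ℕ} (y : Fin N → ℝ) {lam : ℝ} (hlam : 0 < lam)
    {Rc : ℝ} {P : Finset (Finset (Fin N))} (hobj : Robj y lam P ≤ Rc) :
    P.card ≤ ⌊Rc / lam⌋₊ := by
  refine Nat.le_floor ?_
  rw [le_div_iff₀ hlam, mul_comm]
  exact (mul_card_le_Robj y lam P).trans hobj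

/-- `hsat` says that every block is a union of fibres of `f`, so distinct blocks have disjoint
images under `f`. -/
theorem card_le_card_of_saturated {α β : Type*} [Fintype β] (f : α → β)
    {P : Finset (Finset α)} (hne : ∀ B ∈ P, B.Nonempty)
    (hdisj : (P : Set (Finset α)).PairwiseDisjoint id)
    (hsat : ∀ i j, f i = f j → ∀ B ∈ P, i ∈ B → j ∈ B) :
    P.card ≤ Fintype.card β := by
  rw [← card_univ]
  refine card_le_card_of_forall_subsingleton (fun B b => ∃ i ∈ B, f i = b) ?_ ?_
  · intro B hB
    obtain ⟨i, hi⟩ := hne B hB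
    exact ⟨f i, mem_univ _, i, hi, rfl⟩
  · rintro b - B ⟨hB, i, hi, rfl⟩ B' ⟨hB', j, hj, hij⟩
    by_contra hne'
    exact disjoint_left.mp (hdisj hB hB' hne') (hsat i j hij.symm B hB hi) hj

theorem upper_bound_number_of_leaves_general
    {N M : ℕ} (x : Fin N → Fin M → Bool) (y : Fin N → ℝ)
    (lam : ℝ) (hlam : 0 < lam) (Rc : ℝ)
    (P : Finset (Finset (Fin N))) (hP : IsPartitionOn Finset.univ P)
    (hPx : FeatureConsistent x P)
    (hobj : Robj y lam P ≤ Rc) :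
    P.card ≤ min (Nat.floor (Rc / lam)) (2 ^ M) := by
  refine le_min (card_le_floor_div_of_Robj_le y hlam hobj) ?_
  have hdisj : (P : Set (Finset (Fin N))).PairwiseDisjoint id := fun B hB B' hB' hBB' =>
    hP.2.1 B hB B' hB' hBB'
  simpa using card_le_card_of_saturated x hP.1 hdisj hPx

/-- **Upper Bound on the Number of Leaves.** For `λ > 0`, `R^c ≥ 0`, and a
feature-consistent partition `P` with `R(P) ≤ R^c`, the number of leaves satisfies
`|P| ≤ min(⌊R^c/λ⌋, 2^M)`. -/
theorem upper_bound_number_of_leaves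
    {N M : ℕ} (hN : 1 ≤ N) (x : Fin N → Fin M → Bool) (y : Fin N → ℝ)
    (lam : ℝ) (hlam : 0 < lam) (Rc : ℝ) (hRc : 0 ≤ Rc)
    (P : Finset (Finset (Fin N))) (hP : IsPartitionOn Finset.univ P)
    (hPx : FeatureConsistent x P)
    (hobj : Robj y lam P ≤ Rc) :
    P.card ≤ min (Nat.floor (Rc / lam)) (2 ^ M) :=
  upper_bound_number_of_leaves_general x y lam hlam Rc P hP hPx hobj
end

section
/- Let λ > 0 and R^c ∈ ℝ. Let P be a partition of Fin N with R(P) ≤ R^c, let F be a subset of the set of blocks of P, and let H be a natural number with H ≤ |P|. Then |P| ≤ H + ⌊(R^c − (1/N)·∑_{B∈F} SSE(B) − λ·H)/λ⌋. (Parent-specific upper bound on the number of leaves: every child of a parent tree with H leaves and fixed-leaf loss (1/N)·∑_{B∈F} SSE(B) whose objective does not exceed R^c has at most this many leaves.) -/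
open Finset

theorem add_le_Robj_of_subset {N : ℕ} (y : Fin N → ℝ) (lam : ℝ)
    {F P : Finset (Finset (Fin N))} (hF : F ⊆ P) :
    (1 / (N : ℝ)) * ∑ B ∈ F, sse y B + lam * (P.card : ℝ) ≤ Robj y lam P := by
  have hsum : ∑ B ∈ F, sse y B ≤ ∑ B ∈ P, sse y B :=
    Finset.sum_le_sum_of_subset_of_nonneg hF fun B _ _ => sse_nonneg y B
  unfold Robj
  gcongr

theorem le_add_floor_of_mul_le {n : ℕ} (H : ℕ) {a c : ℝ} (ha : 0 < a) (h : a * n ≤ c) :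
    n ≤ H + ⌊(c - a * H) / a⌋₊ := by
  rcases le_total n H with hnH | hHn
  · omega
  · have hdiff : ((n - H : ℕ) : ℝ) ≤ (c - a * H) / a := by
      rw [le_div_iff₀ ha, Nat.cast_sub hHn]
      linarith
    have := Nat.le_floor hdiff
    omega

theorem parent_specific_upper_bound_leaves_general
    {N : ℕ} (y : Fin N → ℝ) (lam : ℝ) (hlam : 0 < lam) (Rc : ℝ)
    (P : Finset (Finset (Fin N)))
    (hobj : Robj y lam P ≤ Rc)
    (F : Finset (Finset (Fin N))) (hF : F ⊆ P)
    (H : ℕ) :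
    P.card ≤ H + Nat.floor ((Rc - (1 / (N : ℝ)) * ∑ B ∈ F, sse y B - lam * (H : ℝ)) / lam) := by
  have hcost := (add_le_Robj_of_subset y lam hF).trans hobj
  exact le_add_floor_of_mul_le H hlam (by linarith)

/-- **Parent-specific upper bound on the number of leaves.** For `λ > 0`, a partition
`P` with `R(P) ≤ R^c`, a subset `F` of its blocks and `H ≤ |P|`:
`|P| ≤ H + ⌊(R^c − (1/N)·∑_{B∈F} SSE(B) − λ·H)/λ⌋`. -/
theorem parent_specific_upper_bound_leaves
    {N : ℕ} (hN : 1 ≤ N) (y : Fin N → ℝ) (lam : ℝ) (hlam : 0 < lam) (Rc : ℝ)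
    (P : Finset (Finset (Fin N))) (hP : IsPartitionOn Finset.univ P)
    (hobj : Robj y lam P ≤ Rc)
    (F : Finset (Finset (Fin N))) (hF : F ⊆ P)
    (H : ℕ) (hH : H ≤ P.card) :
    P.card ≤ H + Nat.floor ((Rc - (1 / (N : ℝ)) * ∑ B ∈ F, sse y B - lam * (H : ℝ)) / lam) :=
  parent_specific_upper_bound_leaves_general y lam hlam Rc P hobj F hF H
end
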